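/- In the linear order Φ(S), for each limit ordinal α ∉ S, the set of elements lying in blocks τ_β with β < α (together with the initial 1 + η part) has no least upper bound in Φ(S). -/

import Mathlib

open Set

noncomputable section

/-- The first uncountable ordinal. -/
def omegaOne : Ordinal := (Cardinal.aleph 1).ord

/-- A set of ordinals is closed: it contains the supremum of every
nonempty bounded subset of itself. -/
def OClosed (C : Set Ordinal) : Prop :=
  ∀ X ⊆ C, X.Nonempty → BddAbove X → sSup X ∈ C

/-- A club subset of `ω₁`: closed and unbounded in `ω₁`. -/
def Club' (C : Set Ordinal) : Prop :=
  OClosed C ∧ C ⊆ Set.Iio omegaOne ∧ ∀ α < omegaOne, ∃ β ∈ C, α < β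

open Classical in
/-- The block `τ_α`: `1 + η` if `α ∈ S` and `η` otherwise. -/
def tau (S : Set Ordinal) (α : Ordinal) : Type :=
  if α ∈ S then Unit ⊕ₗ ℚ else ℚ

instance (S : Set Ordinal) (α : Ordinal) : LinearOrder (tau S α) := by
  unfold tau; split <;> infer_instance

/-- `Φ(S) = 1 + η + Σ_{α<ω₁} τ_α`, realized as a lexicographically
ordered sum. -/
def Phi (S : Set Ordinal) : Type 1 :=
  (ULift.{1} (Unit ⊕ₗ ℚ)) ⊕ₗ
    (Lex (Sigma (fun α : {β : Ordinal // β < omegaOne} => tau S α.1)))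

instance (S : Set Ordinal) : LinearOrder (Phi S) := by
  unfold Phi; infer_instance

/-- The elements of `Φ(S)` lying in the initial `1 + η` part or in a block
`τ_β` with `β < α`. -/
def below (S : Set Ordinal) (α : Ordinal) : Set (Phi S) :=
  {x | Sum.elim (fun _ => True) (fun p => ((ofLex p).1).1 < α) (ofLex x)}

/-- The elements of `Φ(S)` lying in the block `τ_α`. -/
def inBlock (S : Set Ordinal) (α : Ordinal) : Set (Phi S) :=
  {x | ∃ p, ofLex x = Sum.inr p ∧ ((ofLex p).1).1 = α}

/- auxiliary -/
lemma gen' (T : Type) (hT : T = ℚ) (pf : LinearOrder T = LinearOrder ℚ) (t : T) :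
    ∃ t' : T, @LT.lt T (@Preorder.toLT T (@PartialOrder.toPreorder T
      (@LinearOrder.toPartialOrder T (pf.mpr inferInstance)))) t' t := by
  subst hT
  have : pf = rfl := Subsingleton.elim _ _
  rw [this]
  exact exists_lt t

lemma inst_eq' (S : Set Ordinal) (α : Ordinal) (h : α ∉ S) :
    instLinearOrderTau S α = (instLinearOrderTau._proof_1 S α h).mpr inferInstance := by
  have e : Classical.propDecidable (α ∈ S) = isFalse h := Subsingleton.elim _ _
  exact congrArg (fun d : Decidable (α ∈ S) =>
    @Decidable.casesOn _ (fun _ => LinearOrder (tau S α)) d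
      (fun hf => (instLinearOrderTau._proof_1 S α hf).mpr inferInstance)
      (fun ht => (instLinearOrderTau._proof_2 S α ht).mpr inferInstance)) e

lemma tau_exists_lt' (S : Set Ordinal) (α : Ordinal) (h : α ∉ S) (t : tau S α) :
    ∃ t' : tau S α, t' < t := by
  rw [inst_eq' S α h]
  exact gen' (tau S α) (if_neg h) (instLinearOrderTau._proof_1 S α h) t

lemma tau_nonempty' (S : Set Ordinal) (α : Ordinal) : Nonempty (tau S α) := by
  unfold tau; split
  · exact ⟨toLex (Sum.inr 0)⟩
  · exact ⟨(0 : ℚ)⟩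

/-- element of `Phi S` in block `γ` -/
def elt (S : Set Ordinal) (γ : {β : Ordinal // β < omegaOne}) (t : tau S γ.1) : Phi S :=
  toLex (Sum.inr (toLex ⟨γ, t⟩))

lemma elt_mem_below (S : Set Ordinal) (α : Ordinal) (γ : {β : Ordinal // β < omegaOne})
    (t : tau S γ.1) (h : γ.1 < α) : elt S γ t ∈ below S α := h

lemma elt_upperBound (S : Set Ordinal) (α : Ordinal) (hα : α < omegaOne)
    (t : tau S α) : elt S ⟨α, hα⟩ t ∈ upperBounds (below S α) := by
  intro x hx
  have hx' : Sum.elim (fun _ => True) (fun p => ((ofLex p).1).1 < α) (ofLex x) := hx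
  rcases hox : ofLex x with a | p
  · rw [hox] at hx'
    calc x = (show Phi S from toLex (ofLex x)) := rfl
    _ = (show Phi S from toLex (Sum.inl a)) := by rw [hox]
    _ ≤ (show Phi S from toLex (Sum.inr (toLex ⟨⟨α, hα⟩, t⟩))) := Sum.Lex.inl_le_inr _ _
  · rw [hox] at hx'
    simp only [Sum.elim_inr] at hx'
    calc x = (show Phi S from toLex (ofLex x)) := rfl
    _ = (show Phi S from toLex (Sum.inr p)) := by rw [hox]
    _ ≤ (show Phi S from toLex (Sum.inr (toLex ⟨⟨α, hα⟩, t⟩))) := by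
        refine Sum.Lex.inr_le_inr_iff.mpr ?_
        refine Sigma.Lex.le_def.mpr (Or.inl ?_)
        exact Subtype.coe_lt_coe.mp hx'


/-- for a limit ordinal `α ∉ S`, the set of elements of `Φ(S)`
lying in blocks `τ_β` with `β < α` (together with the initial `1 + η` part)
has no least upper bound in `Φ(S)`. -/
theorem stmt16 (S : Set Ordinal) (hS : S ⊆ Set.Iio omegaOne)
    (α : Ordinal) (hα : α < omegaOne) (hlim : Order.IsSuccLimit α) (hαS : α ∉ S) :
    ¬ ∃ m : Phi S, IsLUB (below S α) m := by
  rintro ⟨m, hub, hlb⟩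
  obtain ⟨t0⟩ := tau_nonempty' S α
  rcases hom : ofLex m with a | ⟨⟨γ, hγ⟩, t⟩
  · -- m in initial part: not an upper bound
    have hm : m = toLex (Sum.inl a) := by rw [← hom]; rfl
    have h0 : (0 : Ordinal) < omegaOne := hlim.pos.trans hα
    obtain ⟨s0⟩ := tau_nonempty' S 0
    have hmem : elt S ⟨0, h0⟩ s0 ∈ below S α := elt_mem_below S α _ _ hlim.pos
    have hle := hub hmem
    rw [hm] at hle
    exact Sum.Lex.not_inr_le_inl hle
  · have hm : m = toLex (Sum.inr ⟨⟨γ, hγ⟩, t⟩) := by rw [← hom]; rfl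
    have hsucclt : γ < γ + 1 := by
      rw [Ordinal.add_one_eq_succ]; exact Order.lt_succ γ
    -- γ ≥ α
    have hγα : α ≤ γ := by
      by_contra hlt
      push_neg at hlt
      have hsucc : γ + 1 < α := by
        rw [Ordinal.add_one_eq_succ]; exact hlim.succ_lt hlt
      obtain ⟨s1⟩ := tau_nonempty' S (γ + 1)
      have h1 : γ + 1 < omegaOne := hsucc.trans hα
      have hmem : elt S ⟨γ + 1, h1⟩ s1 ∈ below S α := elt_mem_below S α _ _ hsucc
      have hle := hub hmem
      rw [hm] at hle
      have hle2 := Sum.Lex.inr_le_inr_iff.mp hle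
      rcases Sigma.Lex.le_def.mp hle2 with h | ⟨h, -⟩
      · exact absurd (Subtype.mk_lt_mk.mp h) (asymm hsucclt)
      · have h' : γ + 1 = γ := congrArg Subtype.val h
        exact absurd h' hsucclt.ne'
    rcases eq_or_lt_of_le hγα with heq | hgt
    · -- γ = α : find smaller upper bound in same block
      subst heq
      obtain ⟨t', ht'⟩ := tau_exists_lt' S α hαS t
      have hub' : elt S ⟨α, hγ⟩ t' ∈ upperBounds (below S α) := elt_upperBound S α hγ t'
      have hmle := hlb hub'
      have hlt : elt S ⟨α, hγ⟩ t' < m := by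
        rw [hm]
        exact Sum.Lex.inr_lt_inr_iff.mpr (Sigma.Lex.lt_def.mpr (Or.inr ⟨rfl, ht'⟩))
      exact absurd hmle (not_le.mpr hlt)
    · -- γ > α : block-α element is a smaller upper bound
      have hub' : elt S ⟨α, hα⟩ t0 ∈ upperBounds (below S α) := elt_upperBound S α hα t0
      have hmle := hlb hub'
      have hlt : elt S ⟨α, hα⟩ t0 < m := by
        rw [hm]
        exact Sum.Lex.inr_lt_inr_iff.mpr (Sigma.Lex.lt_def.mpr (Or.inl hgt))
      exact absurd hmle (not_le.mpr hlt)
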